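/- Let k, m ∈ ℚ with k ≠ −1 and m ≠ −1. Let x₁, x₂, y₁, y₂ : ℝ → ℂ be differentiable functions such that x₁(t) lies in the slit plane ℂ \ (−∞, 0] for all t, satisfying x₁' = 2y₂, x₂' = 2y₁, y₁' = −k·x₁^(k−1) − m·x₁^(m−1), y₂' = 0, where complex powers are principal-branch powers (cpow). Then both functions t ↦ y₂(t) and t ↦ (x₁(t)y₁(t) − x₂(t)y₂(t))·y₂(t) + (k/(2(k+1)))·x₁(t)^(k+1) + (m/(2(m+1)))·x₁(t)^(m+1) are constant on ℝ. -/

import Mathlib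

lemma const_of_hasDerivAt_zero (f : ℝ → ℂ) (h : ∀ t, HasDerivAt f 0 t) :
    ∀ s t : ℝ, f s = f t := by
  have hdiff : Differentiable ℝ f := fun t => (h t).differentiableAt
  intro s t
  exact is_const_of_deriv_eq_zero hdiff (fun x => (h x).deriv) s t

/-- Case (i) of Proposition 6 of the paper (super-integrability of the
exceptional potential with `ω̃ = 0`): the Hamiltonian system generated by
`H₀ = 2y₁y₂ + x₁^k + x₁^m` admits the two first integrals `F₁ = y₂` and
`F₂ = (x₁y₁ − x₂y₂)y₂ + (k/(2(k+1)))x₁^{k+1} + (m/(2(m+1)))x₁^{m+1}`. -/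
theorem exceptional_superintegrable_omega_zero (k m : ℚ)
    (hk : k ≠ -1) (hm : m ≠ -1)
    (x₁ x₂ y₁ y₂ : ℝ → ℂ)
    (hslit : ∀ t, x₁ t ∈ Complex.slitPlane)
    (hx₁ : ∀ t, HasDerivAt x₁ (2 * y₂ t) t)
    (hx₂ : ∀ t, HasDerivAt x₂ (2 * y₁ t) t)
    (hy₁ : ∀ t, HasDerivAt y₁
      (-(k : ℂ) * x₁ t ^ ((k : ℂ) - 1) - (m : ℂ) * x₁ t ^ ((m : ℂ) - 1)) t)
    (hy₂ : ∀ t, HasDerivAt y₂ (0 : ℂ) t) :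
    (∀ s t : ℝ, y₂ s = y₂ t) ∧
    (∀ s t : ℝ,
      (x₁ s * y₁ s - x₂ s * y₂ s) * y₂ s
        + ((k : ℂ) / (2 * ((k : ℂ) + 1))) * x₁ s ^ ((k : ℂ) + 1)
        + ((m : ℂ) / (2 * ((m : ℂ) + 1))) * x₁ s ^ ((m : ℂ) + 1)
      = (x₁ t * y₁ t - x₂ t * y₂ t) * y₂ t
        + ((k : ℂ) / (2 * ((k : ℂ) + 1))) * x₁ t ^ ((k : ℂ) + 1)
        + ((m : ℂ) / (2 * ((m : ℂ) + 1))) * x₁ t ^ ((m : ℂ) + 1)) := by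
  have hk' : (k : ℂ) + 1 ≠ 0 := by
    intro h
    apply hk
    have h' : (k : ℂ) = -1 := eq_neg_of_add_eq_zero_left h
    exact_mod_cast h'
  have hm' : (m : ℂ) + 1 ≠ 0 := by
    intro h
    apply hm
    have h' : (m : ℂ) = -1 := eq_neg_of_add_eq_zero_left h
    exact_mod_cast h'
  constructor
  · exact const_of_hasDerivAt_zero y₂ hy₂
  · apply const_of_hasDerivAt_zero
    intro t
    have hx0 : x₁ t ≠ 0 := Complex.slitPlane_ne_zero (hslit t)
    have h2 : HasDerivAt (fun t => x₁ t ^ ((k : ℂ) + 1))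
        ((((k : ℂ) + 1) * x₁ t ^ ((k : ℂ) + 1 - 1)) * (2 * y₂ t)) t :=
      (Complex.hasStrictDerivAt_cpow_const (hslit t)).hasDerivAt.comp t (hx₁ t)
    have h3 : HasDerivAt (fun t => x₁ t ^ ((m : ℂ) + 1))
        ((((m : ℂ) + 1) * x₁ t ^ ((m : ℂ) + 1 - 1)) * (2 * y₂ t)) t :=
      (Complex.hasStrictDerivAt_cpow_const (hslit t)).hasDerivAt.comp t (hx₁ t)
    have H := ((((hx₁ t).mul (hy₁ t)).sub ((hx₂ t).mul (hy₂ t))).mul (hy₂ t)).add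
        (h2.const_mul ((k : ℂ) / (2 * ((k : ℂ) + 1)))) |>.add
        (h3.const_mul ((m : ℂ) / (2 * ((m : ℂ) + 1))))
    convert H using 1
    · rfl
    · rfl
    have ek : x₁ t ^ ((k : ℂ) + 1 - 1) = x₁ t ^ ((k : ℂ) - 1) * x₁ t := by
      rw [show (k : ℂ) + 1 - 1 = ((k : ℂ) - 1) + 1 by ring, Complex.cpow_add _ _ hx0,
        Complex.cpow_one]
    have em : x₁ t ^ ((m : ℂ) + 1 - 1) = x₁ t ^ ((m : ℂ) - 1) * x₁ t := by
      rw [show (m : ℂ) + 1 - 1 = ((m : ℂ) - 1) + 1 by ring, Complex.cpow_add _ _ hx0,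
        Complex.cpow_one]
    rw [ek, em]
    field_simp
    ring
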